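/- Let L be a connected graph Laplacian on vertex set V, F ⊆ V, C = V \ F, and S the Schur complement of L with respect to elimination of F. If x = (0_F; x_C) is orthogonal to the all-ones vector, then x^T L^+ x = x_C^T S^+ x_C. In particular, effective resistances between vertices of C are preserved by taking the Schur complement onto C. -/

import Mathlib

open Matrix

/-- `B` is the Moore–Penrose pseudoinverse of `A`. -/
def IsMoorePenrose {n : Type*} [Fintype n] [DecidableEq n] (A B : Matrix n n ℝ) : Prop :=
  A * B * A = A ∧ B * A * B = B ∧ (A * B)ᵀ = A * B ∧ (B * A)ᵀ = B * A

/-- The weighted Laplacian of the weight function `w`. -/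
def lapW {V : Type*} [Fintype V] [DecidableEq V] (w : V → V → ℝ) : Matrix V V ℝ :=
  Matrix.of fun i j => if i = j then ∑ k, w i k else - w i j

/-- The Schur complement of `L` onto the vertices satisfying `p`, eliminating the rest. -/
noncomputable def schurOn {V : Type*} [Fintype V] [DecidableEq V] (L : Matrix V V ℝ)
    (p : V → Prop) [DecidablePred p] : Matrix {i // p i} {i // p i} ℝ :=
  L.submatrix (Subtype.val : {i // p i} → V) (Subtype.val : {i // p i} → V) -
    L.submatrix (Subtype.val : {i // p i} → V) (Subtype.val : {i // ¬ p i} → V) *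
      (L.submatrix (Subtype.val : {i // ¬ p i} → V) (Subtype.val : {i // ¬ p i} → V))⁻¹ *
      L.submatrix (Subtype.val : {i // ¬ p i} → V) (Subtype.val : {i // p i} → V)

/-!
Since `x ⊥ 𝟙 = ker L`, the vector `y = L⁺ x` solves `L y = x`. As `x` vanishes on `F`, so does
`L y`, and eliminating `F` shows `S y_C = x_C`; the Schur complement of a connected Laplacian again
has kernel `span 𝟙`, so `S⁺ x_C` and `y_C` differ by a constant, which is invisible to `x_C`.
Hence `x_Cᵀ S⁺ x_C = x_Cᵀ y_C = xᵀ y = xᵀ L⁺ x`.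
-/

theorem SimpleGraph.Reachable.eq_of_forall_adj {V β : Type*} {G : SimpleGraph V} {f : V → β}
    (hf : ∀ a b, G.Adj a b → f a = f b) {u v : V} (h : G.Reachable u v) : f u = f v := by
  obtain ⟨walk⟩ := h
  induction walk with
  | nil => rfl
  | cons hadj _ ih => exact (hf _ _ hadj).trans ih

section

variable {n V : Type*} [Fintype n] [Fintype V]

namespace IsMoorePenrose

variable [DecidableEq n] {A B : Matrix n n ℝ} {x y : n → ℝ}

theorem mulVec_mulVec_eq (hA : Aᵀ = A) (h : IsMoorePenrose A B)
    (hx : ∀ v, A *ᵥ v = 0 → x ⬝ᵥ v = 0) : A *ᵥ (B *ᵥ x) = x := by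
  obtain ⟨hABA, -, hAB, -⟩ := h
  have hA_AB : A * (A * B) = A := by
    simpa only [transpose_mul, hAB, hA] using congrArg transpose hABA
  -- `u` lies in `ker A`, so it is orthogonal to `x` and to `ABx ∈ range A = (ker A)ᗮ`.
  set u := x - (A * B) *ᵥ x
  have hAu : A *ᵥ u = 0 := by
    rw [mulVec_sub, mulVec_mulVec, hA_AB, sub_self]
  have hABu : ((A * B) *ᵥ x) ⬝ᵥ u = 0 := by
    rw [dotProduct_comm, dotProduct_mulVec, ← mulVec_transpose, transpose_mul, hA,
      ← mulVec_mulVec, hAu, mulVec_zero, zero_dotProduct]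
  have hu : u = 0 := by
    rw [← dotProduct_self_eq_zero]
    calc u ⬝ᵥ u = x ⬝ᵥ u - ((A * B) *ᵥ x) ⬝ᵥ u := sub_dotProduct _ _ _
      _ = 0 := by rw [hx u hAu, hABu, sub_zero]
  rw [mulVec_mulVec, ← sub_eq_zero.mp hu]

theorem dotProduct_mulVec_eq (hA : Aᵀ = A) (h : IsMoorePenrose A B)
    (hx : ∀ v, A *ᵥ v = 0 → x ⬝ᵥ v = 0) (hy : A *ᵥ y = x) : x ⬝ᵥ B *ᵥ x = x ⬝ᵥ y := by
  have hker : A *ᵥ (B *ᵥ x - y) = 0 := by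
    rw [mulVec_sub, h.mulVec_mulVec_eq hA hx, hy, sub_self]
  simpa only [dotProduct_sub, sub_eq_zero] using hx _ hker

end IsMoorePenrose

theorem dotProduct_eq_zero_of_ker_const {A : Matrix n n ℝ}
    (hA : ∀ v, A *ᵥ v = 0 → ∃ c, v = fun _ => c) {x : n → ℝ} (hx : ∑ i, x i = 0) :
    ∀ v, A *ᵥ v = 0 → x ⬝ᵥ v = 0 := by
  intro v hv
  obtain ⟨c, rfl⟩ := hA v hv
  simp only [dotProduct, ← Finset.sum_mul, hx, zero_mul]

theorem sum_subtype_eq_sum_of_eq_zero {p : V → Prop} [DecidablePred p] {f : V → ℝ}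
    (hf : ∀ i, ¬ p i → f i = 0) : ∑ i : {i // p i}, f i = ∑ i, f i := by
  rw [← Finset.sum_subtype (Finset.univ.filter p) (by simp)]
  exact Finset.sum_filter_of_ne fun i _ hi => not_not.mp (mt (hf i) hi)

theorem dotProduct_eq_dotProduct_subtype {p : V → Prop} [DecidablePred p] {x : V → ℝ}
    (hx : ∀ i, ¬ p i → x i = 0) (y : V → ℝ) :
    x ⬝ᵥ y = (fun i : {i // p i} => x i) ⬝ᵥ (fun i : {i // p i} => y i) :=
  (sum_subtype_eq_sum_of_eq_zero fun i hi => by rw [hx i hi, zero_mul]).symm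

section Laplacian

variable [DecidableEq V] {w : V → V → ℝ}

theorem lapW_transpose (hsymm : ∀ i j, w i j = w j i) : (lapW w)ᵀ = lapW w := by
  ext i j
  by_cases h : i = j
  · subst h; rfl
  · simp [lapW, h, Ne.symm h, hsymm i j]

theorem lapW_mulVec_apply (hdiag : ∀ i, w i i = 0) (v : V → ℝ) (i : V) :
    (lapW w *ᵥ v) i = ∑ j, w i j * (v i - v j) := by
  have hL : lapW w = diagonal (fun i => ∑ k, w i k) - of w := by
    ext i j
    by_cases h : i = j
    · subst h; simp [lapW, hdiag]
    · simp [lapW, h]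
  rw [hL, sub_mulVec, Pi.sub_apply, mulVec_diagonal]
  simp only [mul_sub, Finset.sum_sub_distrib, ← Finset.sum_mul]
  rfl

theorem two_mul_dotProduct_lapW_mulVec (hsymm : ∀ i j, w i j = w j i) (hdiag : ∀ i, w i i = 0)
    (v : V → ℝ) : 2 * (v ⬝ᵥ lapW w *ᵥ v) = ∑ i, ∑ j, w i j * (v i - v j) ^ 2 := by
  have hform : v ⬝ᵥ lapW w *ᵥ v = ∑ i, ∑ j, w i j * (v i * (v i - v j)) := by
    simp only [dotProduct, lapW_mulVec_apply hdiag, Finset.mul_sum]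
    exact Finset.sum_congr rfl fun i _ => Finset.sum_congr rfl fun j _ => by ring
  have hswap : ∑ i, ∑ j, w i j * (v i * (v i - v j)) =
      ∑ i, ∑ j, w i j * (v j * (v j - v i)) := by
    rw [Finset.sum_comm]
    simp only [hsymm _ _]
  rw [two_mul, hform]
  nth_rw 2 [hswap]
  rw [← Finset.sum_add_distrib]
  exact Finset.sum_congr rfl fun i _ => by
    rw [← Finset.sum_add_distrib]
    exact Finset.sum_congr rfl fun j _ => by ring

theorem eq_of_lapW_mulVec_eq_zero (hsymm : ∀ i j, w i j = w j i) (hnn : ∀ i j, 0 ≤ w i j)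
    (hdiag : ∀ i, w i i = 0) {v : V → ℝ} (hv : lapW w *ᵥ v = 0) {i j : V} (hij : w i j ≠ 0) :
    v i = v j := by
  have hterm : ∀ i j, 0 ≤ w i j * (v i - v j) ^ 2 := fun i j => mul_nonneg (hnn i j) (sq_nonneg _)
  have hsum : ∑ i, ∑ j, w i j * (v i - v j) ^ 2 = 0 := by
    rw [← two_mul_dotProduct_lapW_mulVec hsymm hdiag, hv, dotProduct_zero, mul_zero]
  rw [Finset.sum_eq_zero_iff_of_nonneg fun i _ => Finset.sum_nonneg fun j _ => hterm i j] at hsum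
  have hzero : w i j * (v i - v j) ^ 2 = 0 :=
    (Finset.sum_eq_zero_iff_of_nonneg fun j _ => hterm i j).mp (hsum i (Finset.mem_univ _)) j
      (Finset.mem_univ _)
  exact sub_eq_zero.mp (pow_eq_zero_iff two_ne_zero |>.mp ((mul_eq_zero.mp hzero).resolve_left hij))

theorem lapW_ker_const (hsymm : ∀ i j, w i j = w j i) (hnn : ∀ i j, 0 ≤ w i j)
    (hdiag : ∀ i, w i i = 0) (hconn : (SimpleGraph.fromRel fun i j => w i j ≠ 0).Connected) :
    ∀ v, lapW w *ᵥ v = 0 → ∃ c, v = fun _ => c := by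
  intro v hv
  obtain ⟨i₀⟩ := hconn.nonempty
  refine ⟨v i₀, funext fun i => (hconn.preconnected i i₀).eq_of_forall_adj fun a b hab => ?_⟩
  rcases (SimpleGraph.fromRel_adj _ a b).mp hab with ⟨-, h | h⟩
  · exact eq_of_lapW_mulVec_eq_zero hsymm hnn hdiag hv h
  · exact (eq_of_lapW_mulVec_eq_zero hsymm hnn hdiag hv h).symm

end Laplacian

section Schur

theorem mulVec_comp_eq_submatrix_mulVec_add (L : Matrix V V ℝ) (p : V → Prop) [DecidablePred p]
    {ι : Type*} (r : ι → V) (u : V → ℝ) :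
    (fun i => (L *ᵥ u) (r i)) =
      L.submatrix r (Subtype.val : {j // p j} → V) *ᵥ (fun j => u j) +
        L.submatrix r (Subtype.val : {j // ¬ p j} → V) *ᵥ (fun j => u j) :=
  funext fun i => (Fintype.sum_subtype_add_sum_subtype p fun j => L (r i) j * u j).symm

variable [DecidableEq V] {p : V → Prop} [DecidablePred p]

theorem schurOn_mulVec (L : Matrix V V ℝ)
    (hFF : IsUnit (L.submatrix (Subtype.val : {i // ¬ p i} → V)
      (Subtype.val : {i // ¬ p i} → V)).det)
    (u : V → ℝ) (hu : ∀ i : {i // ¬ p i}, (L *ᵥ u) i = 0) :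
    schurOn L p *ᵥ (fun i : {i // p i} => u i) = fun i : {i // p i} => (L *ᵥ u) i := by
  have hF := mulVec_comp_eq_submatrix_mulVec_add L p (Subtype.val : {i // ¬ p i} → V) u
  rw [show (fun i : {i // ¬ p i} => (L *ᵥ u) i) = 0 from funext hu] at hF
  have huF := congrArg (fun z => (L.submatrix (Subtype.val : {i // ¬ p i} → V)
      (Subtype.val : {i // ¬ p i} → V))⁻¹ *ᵥ z) (eq_neg_of_add_eq_zero_left hF.symm)
  simp only [mulVec_neg, mulVec_mulVec, nonsing_inv_mul _ hFF, one_mulVec] at huF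
  rw [mulVec_comp_eq_submatrix_mulVec_add L p Subtype.val u, schurOn, sub_mulVec, Matrix.mul_assoc,
    ← mulVec_mulVec, huF, mulVec_neg, sub_neg_eq_add]

theorem exists_extension_mulVec_eq_zero (L : Matrix V V ℝ)
    (hFF : IsUnit (L.submatrix (Subtype.val : {i // ¬ p i} → V)
      (Subtype.val : {i // ¬ p i} → V)).det)
    (v : {i // p i} → ℝ) :
    ∃ u : V → ℝ, (fun i : {i // p i} => u i) = v ∧ ∀ i : {i // ¬ p i}, (L *ᵥ u) i = 0 := by
  let uF := -((L.submatrix (Subtype.val : {i // ¬ p i} → V) (Subtype.val : {i // ¬ p i} → V))⁻¹ *ᵥ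
    (L.submatrix Subtype.val Subtype.val *ᵥ v))
  let u : V → ℝ := fun i => if h : p i then v ⟨i, h⟩ else uF ⟨i, h⟩
  have huC : (fun i : {i // p i} => u i) = v := funext fun i => dif_pos i.2
  have huF : (fun i : {i // ¬ p i} => u i) = uF := funext fun i => dif_neg i.2
  refine ⟨u, huC, fun i => ?_⟩
  have := congrFun (mulVec_comp_eq_submatrix_mulVec_add L p Subtype.val u) i
  rwa [huC, huF, mulVec_neg, mulVec_mulVec, mul_nonsing_inv _ hFF, one_mulVec,
    add_neg_cancel] at this

theorem schurOn_ker_const {L : Matrix V V ℝ}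
    (hFF : IsUnit (L.submatrix (Subtype.val : {i // ¬ p i} → V)
      (Subtype.val : {i // ¬ p i} → V)).det)
    (hL : ∀ u, L *ᵥ u = 0 → ∃ c, u = fun _ => c) :
    ∀ v, schurOn L p *ᵥ v = 0 → ∃ c, v = fun _ => c := by
  intro v hv
  obtain ⟨u, rfl, huF⟩ := exists_extension_mulVec_eq_zero L hFF v
  have hLu : L *ᵥ u = 0 := by
    funext i
    by_cases h : p i
    · exact congrFun ((schurOn_mulVec L hFF u huF).symm.trans hv) ⟨i, h⟩
    · exact huF ⟨i, h⟩
  obtain ⟨c, rfl⟩ := hL u hLu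
  exact ⟨c, rfl⟩

theorem schurOn_transpose {L : Matrix V V ℝ} (hL : Lᵀ = L) :
    (schurOn L p)ᵀ = schurOn L p := by
  simp only [schurOn, transpose_sub, transpose_mul, transpose_submatrix, transpose_nonsing_inv, hL,
    Matrix.mul_assoc]

end Schur

end

theorem stmt6 {V : Type*} [Fintype V] [DecidableEq V] (w : V → V → ℝ)
    (hsymm : ∀ i j, w i j = w j i) (hnn : ∀ i j, 0 ≤ w i j) (hdiag : ∀ i, w i i = 0)
    (hconn : (SimpleGraph.fromRel fun i j => w i j ≠ 0).Connected)
    (p : V → Prop) [DecidablePred p]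
    (hFF : IsUnit ((lapW w).submatrix (Subtype.val : {i // ¬ p i} → V)
      (Subtype.val : {i // ¬ p i} → V)).det)
    (x : V → ℝ) (hx0 : ∀ i, ¬ p i → x i = 0) (hsum : ∑ i, x i = 0)
    (Lp : Matrix V V ℝ) (hLp : IsMoorePenrose (lapW w) Lp)
    (Sp : Matrix {i // p i} {i // p i} ℝ) (hSp : IsMoorePenrose (schurOn (lapW w) p) Sp) :
    x ⬝ᵥ Lp *ᵥ x = (fun i : {i // p i} => x ↑i) ⬝ᵥ Sp *ᵥ (fun i : {i // p i} => x ↑i) := by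
  have hL := lapW_transpose hsymm
  have hLker := lapW_ker_const hsymm hnn hdiag hconn
  have hy : lapW w *ᵥ (Lp *ᵥ x) = x :=
    hLp.mulVec_mulVec_eq hL (dotProduct_eq_zero_of_ker_const hLker hsum)
  have hSy : schurOn (lapW w) p *ᵥ (fun i : {i // p i} => (Lp *ᵥ x) i) =
      fun i : {i // p i} => x i := by
    rw [schurOn_mulVec _ hFF _ fun i => by rw [hy]; exact hx0 i i.2, hy]
  have hxC : ∀ v, schurOn (lapW w) p *ᵥ v = 0 → (fun i : {i // p i} => x i) ⬝ᵥ v = 0 :=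
    dotProduct_eq_zero_of_ker_const (schurOn_ker_const hFF hLker)
      ((sum_subtype_eq_sum_of_eq_zero hx0).trans hsum)
  calc x ⬝ᵥ Lp *ᵥ x = (fun i : {i // p i} => x i) ⬝ᵥ fun i => (Lp *ᵥ x) i :=
        dotProduct_eq_dotProduct_subtype hx0 _
    _ = _ := (hSp.dotProduct_mulVec_eq (schurOn_transpose hL) hxC hSy).symm
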